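/- Let A be a Krull-Schmidt k-category with admissible ideal I, and let X = ⊕ᵢ Xᵢ, Y = ⊕ⱼ Yⱼ be decompositions into indecomposables with 1_{Xᵢ} ∉ I(Xᵢ,Xᵢ) and 1_{Yⱼ} ∉ I(Yⱼ,Yⱼ) for all i,j. Then a morphism f : X → Y is irreducible in A if and only if its image f + I(X,Y) is irreducible in the quotient category A/I. -/

import Mathlib

open CategoryTheory CategoryTheory.Limits

universe v u

variable {C : Type u} [Category.{v} C] [Preadditive C]

/-- A two-sided ideal of a preadditive category: a family of subgroups of the
Hom-groups closed under composition on both sides. -/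
structure CatIdeal (C : Type u) [Category.{v} C] [Preadditive C] where
  I : ∀ X Y : C, AddSubgroup (X ⟶ Y)
  comp_right : ∀ {X Y Z : C} (f : X ⟶ Y), f ∈ I X Y → ∀ g : Y ⟶ Z, f ≫ g ∈ I X Z
  comp_left : ∀ {X Y Z : C} (f : Y ⟶ Z), f ∈ I Y Z → ∀ g : X ⟶ Y, g ≫ f ∈ I X Z

/-- A morphism `f : X ⟶ Y` lies in the radical of the category if `1_X - g ∘ f`
is invertible for every `g : Y ⟶ X`. -/
def InCatRadical {X Y : C} (f : X ⟶ Y) : Prop :=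
  ∀ g : Y ⟶ X, IsIso (𝟙 X - f ≫ g)

/-- The square of the radical: the subgroup of `Hom(X,Y)` generated by composites
of two radical morphisms. -/
def radSq (X Y : C) : AddSubgroup (X ⟶ Y) :=
  AddSubgroup.closure
    {h | ∃ (W : C) (a : X ⟶ W) (b : W ⟶ Y), InCatRadical a ∧ InCatRadical b ∧ h = a ≫ b}

/-- An object is indecomposable if it is nonzero and admits no nontrivial
direct sum decomposition. -/
def IsIndecomposable [HasBinaryBiproducts C] (X : C) : Prop :=
  ¬ IsZero X ∧ ∀ (A B : C), (X ≅ A ⊞ B) → IsZero A ∨ IsZero B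

/-- `f : X ⟶ Y` is left almost split if it is not a section and every
non-section `u : X ⟶ U` factors through `f`. -/
def LeftAlmostSplit {X Y : C} (f : X ⟶ Y) : Prop :=
  ¬ IsSplitMono f ∧ ∀ (U : C) (u : X ⟶ U), ¬ IsSplitMono u → ∃ v : Y ⟶ U, f ≫ v = u

/-- `f` is left minimal if any `g` with `f ≫ g = f` is an automorphism. -/
def LeftMinimal {X Y : C} (f : X ⟶ Y) : Prop :=
  ∀ g : Y ⟶ Y, f ≫ g = f → IsIso g

/-- `f : X ⟶ Y` is right almost split if it is not a retraction and every
non-retraction `u : U ⟶ Y` factors through `f`. -/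
def RightAlmostSplit {X Y : C} (f : X ⟶ Y) : Prop :=
  ¬ IsSplitEpi f ∧ ∀ (U : C) (u : U ⟶ Y), ¬ IsSplitEpi u → ∃ v : U ⟶ X, v ≫ f = u

/-- `f` is right minimal if any `g` with `g ≫ f = f` is an automorphism. -/
def RightMinimal {X Y : C} (f : X ⟶ Y) : Prop :=
  ∀ g : X ⟶ X, g ≫ f = f → IsIso g

/-- An ideal is admissible if: (i) between indecomposables whose identities are
not in the ideal, the ideal is contained in the square of the radical;
(ii) morphisms in the ideal factor through minimal left almost split morphisms
within the ideal; (iii) dually for minimal right almost split morphisms. -/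
def CatIdeal.Admissible [HasBinaryBiproducts C] (I : CatIdeal C) : Prop :=
  (∀ (X Y : C), IsIndecomposable X → IsIndecomposable Y → 𝟙 X ∉ I.I X X →
      𝟙 Y ∉ I.I Y Y → ∀ f ∈ I.I X Y, f ∈ radSq X Y) ∧
  (∀ (X Y M : C) (f : X ⟶ Y), LeftAlmostSplit f → LeftMinimal f → 𝟙 X ∉ I.I X X →
      ∀ g ∈ I.I X M, ∃ h ∈ I.I Y M, f ≫ h = g) ∧
  (∀ (X Y M : C) (f : X ⟶ Y), RightAlmostSplit f → RightMinimal f → 𝟙 Y ∉ I.I Y Y →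
      ∀ g ∈ I.I M Y, ∃ h ∈ I.I M X, h ≫ f = g)

/-- A category is Krull-Schmidt if every object is a finite direct sum of objects
with local endomorphism rings. -/
def IsKrullSchmidt (C : Type u) [Category.{v} C] [Preadditive C]
    [HasFiniteBiproducts C] : Prop :=
  ∀ Z : C, ∃ (n : ℕ) (Zs : Fin n → C) (_ : Z ≅ ⨁ Zs), ∀ i, IsLocalRing (End (Zs i))

/-- The hom-relation identifying two morphisms when their difference lies in the
ideal; the quotient category `A/I` is the category-theoretic quotient by it. -/
def CatIdeal.rel (I : CatIdeal C) : HomRel C :=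
  fun {X Y} f g => f - g ∈ I.I X Y

/-- A morphism is irreducible if it is neither a section nor a retraction,
and in every factorisation f = g ≫ h, either h is a retraction or g is a section. -/
def IrreducibleHom {D : Type*} [Category D] {X Y : D} (f : X ⟶ Y) : Prop :=
  ¬ IsSplitMono f ∧ ¬ IsSplitEpi f ∧
    ∀ (Z : D) (g : X ⟶ Z) (h : Z ⟶ Y), g ≫ h = f → IsSplitEpi h ∨ IsSplitMono g

/-!
Admissibility puts `I` inside `rad²` between the indecomposable summands of `X` and `Y`, so
every morphism of `I(X, Y)` is a composite `a ≫ b` of two radical morphisms, and every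
endomorphism of `X` or `Y` lying in `I` is radical. As `𝟙 - u` is invertible for radical `u`,
a morphism out of `X` that is a section modulo `I` is a section in `A`, and dually for
retractions onto `Y`. Conversely, a factorisation `f = g ≫ h + a ≫ b` modulo `I` becomes the
exact factorisation `f = [g a] ≫ [h; b]` through a biproduct, and a splitting of `[g a]` or
`[h; b]` yields one of `g` or `h` because `a` and `b` are radical.
-/

open Preadditive

lemma InCatRadical.comp_right {X Y Z : C} {f : X ⟶ Y} (hf : InCatRadical f) (h : Y ⟶ Z) :
    InCatRadical (f ≫ h) := fun g => by
  simpa only [Category.assoc] using hf (h ≫ g)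

/-- Jacobson's lemma across two objects: the inverse of `𝟙 - a ≫ b` is
`𝟙 + a ≫ (𝟙 - b ≫ a)⁻¹ ≫ b`. -/
lemma isIso_id_sub_comp_swap {X W : C} (a : X ⟶ W) (b : W ⟶ X)
    (h : IsIso (𝟙 W - b ≫ a)) : IsIso (𝟙 X - a ≫ b) := by
  set c := inv (𝟙 W - b ≫ a)
  have hc₁ : (𝟙 W - b ≫ a) ≫ c = 𝟙 W := IsIso.hom_inv_id _
  have hc₂ : c ≫ (𝟙 W - b ≫ a) = 𝟙 W := IsIso.inv_hom_id _
  refine ⟨𝟙 X + a ≫ c ≫ b, ?_, ?_⟩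
  · calc (𝟙 X - a ≫ b) ≫ (𝟙 X + a ≫ c ≫ b)
        = 𝟙 X + a ≫ ((𝟙 W - b ≫ a) ≫ c - 𝟙 W) ≫ b := by
          simp only [sub_comp, comp_sub, comp_add, Category.id_comp, Category.comp_id,
            Category.assoc]
          abel
      _ = 𝟙 X := by rw [hc₁, sub_self, zero_comp, comp_zero, add_zero]
  · calc (𝟙 X + a ≫ c ≫ b) ≫ (𝟙 X - a ≫ b)
        = 𝟙 X + a ≫ (c ≫ (𝟙 W - b ≫ a) - 𝟙 W) ≫ b := by
          simp only [sub_comp, comp_sub, add_comp, Category.id_comp, Category.comp_id,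
            Category.assoc]
          abel
      _ = 𝟙 X := by rw [hc₂, sub_self, zero_comp, comp_zero, add_zero]

lemma InCatRadical.comp_left {W X Y : C} {f : X ⟶ Y} (hf : InCatRadical f) (e : W ⟶ X) :
    InCatRadical (e ≫ f) := fun g => by
  simpa only [Category.assoc] using
    isIso_id_sub_comp_swap e (f ≫ g) (by simpa only [Category.assoc] using hf (g ≫ e))

lemma InCatRadical.zero {X Y : C} : InCatRadical (0 : X ⟶ Y) := fun g => by
  rw [zero_comp, sub_zero]
  infer_instance

lemma InCatRadical.neg {X Y : C} {f : X ⟶ Y} (hf : InCatRadical f) : InCatRadical (-f) :=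
  fun g => by simpa only [neg_comp, comp_neg] using hf (-g)

lemma InCatRadical.add {X Y : C} {f f' : X ⟶ Y} (hf : InCatRadical f)
    (hf' : InCatRadical f') : InCatRadical (f + f') := fun g => by
  have := hf g
  have : IsIso (𝟙 X - inv (𝟙 X - f ≫ g) ≫ f' ≫ g) := by
    simpa only [Category.assoc] using hf'.comp_left (inv (𝟙 X - f ≫ g)) g
  have factor : 𝟙 X - (f + f') ≫ g =
      (𝟙 X - f ≫ g) ≫ (𝟙 X - inv (𝟙 X - f ≫ g) ≫ f' ≫ g) := by
    rw [comp_sub, Category.comp_id, IsIso.hom_inv_id_assoc, add_comp]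
    abel
  rw [factor]
  infer_instance

lemma InCatRadical.isIso_id_sub {X : C} {u : X ⟶ X} (hu : InCatRadical u) :
    IsIso (𝟙 X - u) := by
  simpa only [Category.comp_id] using hu (𝟙 X)

lemma isSplitMono_of_inCatRadical_id_sub {X Z : C} {g : X ⟶ Z} {r : Z ⟶ X}
    (h : InCatRadical (𝟙 X - g ≫ r)) : IsSplitMono g := by
  have : IsIso (g ≫ r) := by simpa only [sub_sub_cancel] using h.isIso_id_sub
  exact IsSplitMono.mk' ⟨r ≫ inv (g ≫ r), by rw [← Category.assoc, IsIso.hom_inv_id]⟩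

lemma isSplitEpi_of_inCatRadical_id_sub {Z Y : C} {h : Z ⟶ Y} {s : Y ⟶ Z}
    (hs : InCatRadical (𝟙 Y - s ≫ h)) : IsSplitEpi h := by
  have : IsIso (s ≫ h) := by simpa only [sub_sub_cancel] using hs.isIso_id_sub
  exact IsSplitEpi.mk' ⟨inv (s ≫ h) ≫ s, by rw [Category.assoc, IsIso.inv_hom_id]⟩

def IsCompOfRadical {X Y : C} (u : X ⟶ Y) : Prop :=
  ∃ (W : C) (a : X ⟶ W) (b : W ⟶ Y), InCatRadical a ∧ InCatRadical b ∧ u = a ≫ b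

namespace IsCompOfRadical

lemma zero (X Y : C) : IsCompOfRadical (0 : X ⟶ Y) :=
  ⟨X, 0, 0, .zero, .zero, by rw [comp_zero]⟩

lemma neg {X Y : C} {u : X ⟶ Y} (h : IsCompOfRadical u) : IsCompOfRadical (-u) := by
  obtain ⟨W, a, b, ha, hb, rfl⟩ := h
  exact ⟨W, a, -b, ha, hb.neg, (comp_neg a b).symm⟩

lemma add [HasBinaryBiproducts C] {X Y : C} {u v : X ⟶ Y}
    (hu : IsCompOfRadical u) (hv : IsCompOfRadical v) : IsCompOfRadical (u + v) := by
  obtain ⟨W, a, b, ha, hb, rfl⟩ := hu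
  obtain ⟨W', a', b', ha', hb', rfl⟩ := hv
  refine ⟨W ⊞ W', biprod.lift a a', biprod.desc b b', ?_, ?_, biprod.lift_desc.symm⟩
  · rw [biprod.lift_eq]
    exact (ha.comp_right _).add (ha'.comp_right _)
  · rw [biprod.desc_eq]
    exact (hb.comp_left _).add (hb'.comp_left _)

lemma sum [HasBinaryBiproducts C] {X Y : C} {ι : Type*} (s : Finset ι) {u : ι → (X ⟶ Y)}
    (h : ∀ i ∈ s, IsCompOfRadical (u i)) : IsCompOfRadical (∑ i ∈ s, u i) :=
  Finset.sum_induction _ _ (fun _ _ => add) (zero X Y) h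

lemma of_mem_radSq [HasBinaryBiproducts C] {X Y : C} {u : X ⟶ Y} (h : u ∈ radSq X Y) :
    IsCompOfRadical u :=
  AddSubgroup.closure_induction (fun _ hx => hx) (zero X Y) (fun _ _ _ _ => add)
    (fun _ _ => neg) h

lemma comp_left {W X Y : C} {u : X ⟶ Y} (h : IsCompOfRadical u) (e : W ⟶ X) :
    IsCompOfRadical (e ≫ u) := by
  obtain ⟨V, a, b, ha, hb, rfl⟩ := h
  exact ⟨V, e ≫ a, b, ha.comp_left e, hb, (Category.assoc _ _ _).symm⟩

lemma comp_right {X Y Z : C} {u : X ⟶ Y} (h : IsCompOfRadical u) (e : Y ⟶ Z) :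
    IsCompOfRadical (u ≫ e) := by
  obtain ⟨V, a, b, ha, hb, rfl⟩ := h
  exact ⟨V, a, b ≫ e, ha, hb.comp_right e, Category.assoc _ _ _⟩

lemma inCatRadical {X Y : C} {u : X ⟶ Y} (h : IsCompOfRadical u) : InCatRadical u := by
  obtain ⟨W, a, b, ha, -, rfl⟩ := h
  exact ha.comp_right b

lemma of_biproduct_components [HasBinaryBiproducts C] {ι κ : Type} [Fintype ι] [Fintype κ]
    {Xs : ι → C} {Ys : κ → C} [HasBiproduct Xs] [HasBiproduct Ys] {X Y : C}
    (iX : X ≅ ⨁ Xs) (iY : Y ≅ ⨁ Ys) {u : X ⟶ Y}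
    (h : ∀ i j, IsCompOfRadical ((biproduct.ι Xs i ≫ iX.inv) ≫ u ≫ iY.hom ≫ biproduct.π Ys j)) :
    IsCompOfRadical u := by
  have expand : u = ∑ i, ∑ j, ((iX.hom ≫ biproduct.π Xs i) ≫
      ((biproduct.ι Xs i ≫ iX.inv) ≫ u ≫ iY.hom ≫ biproduct.π Ys j)) ≫
      (biproduct.ι Ys j ≫ iY.inv) :=
    calc u = iX.hom ≫ (∑ i, biproduct.π Xs i ≫ biproduct.ι Xs i) ≫ iX.inv ≫ u ≫ iY.hom ≫
          (∑ j, biproduct.π Ys j ≫ biproduct.ι Ys j) ≫ iY.inv := by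
          simp only [biproduct.total, Category.id_comp, Iso.hom_inv_id_assoc, Iso.hom_inv_id,
            Category.comp_id]
      _ = _ := by
        rw [Finset.sum_comm]
        simp only [sum_comp, comp_sum, Category.assoc]
  rw [expand]
  exact sum _ fun i _ => sum _ fun j _ => ((h i j).comp_left _).comp_right _

end IsCompOfRadical

lemma CatIdeal.Admissible.isCompOfRadical_of_mem [HasBinaryBiproducts C] {I : CatIdeal C}
    (hI : I.Admissible) {ι κ : Type} [Fintype ι] [Fintype κ]
    {Xs : ι → C} {Ys : κ → C} [HasBiproduct Xs] [HasBiproduct Ys] {X Y : C}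
    (iX : X ≅ ⨁ Xs) (iY : Y ≅ ⨁ Ys)
    (hXind : ∀ i, IsIndecomposable (Xs i)) (hYind : ∀ j, IsIndecomposable (Ys j))
    (hXI : ∀ i, 𝟙 (Xs i) ∉ I.I (Xs i) (Xs i)) (hYI : ∀ j, 𝟙 (Ys j) ∉ I.I (Ys j) (Ys j))
    {u : X ⟶ Y} (hu : u ∈ I.I X Y) : IsCompOfRadical u :=
  .of_biproduct_components iX iY fun i j => .of_mem_radSq <|
    hI.1 _ _ (hXind i) (hYind j) (hXI i) (hYI j) _ (I.comp_left _ (I.comp_right _ hu _) _)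

lemma IrreducibleHom.isSplitEpi_or_isSplitMono_of_isCompOfRadical_sub [HasBinaryBiproducts C]
    {X Y Z : C} {f : X ⟶ Y} (hf : IrreducibleHom f) (g : X ⟶ Z) (h : Z ⟶ Y)
    (hu : IsCompOfRadical (f - g ≫ h)) : IsSplitEpi h ∨ IsSplitMono g := by
  obtain ⟨W, a, b, ha, hb, hab⟩ := hu
  have factor : biprod.lift g a ≫ biprod.desc h b = f := by
    rw [biprod.lift_desc, ← hab]
    abel
  rcases hf.2.2 _ _ _ factor with hs | hr
  · obtain ⟨⟨s, hs⟩⟩ := hs.exists_splitEpi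
    have hs' : (s ≫ biprod.fst) ≫ h + (s ≫ biprod.snd) ≫ b = 𝟙 Y := by
      simpa only [biprod.desc_eq, comp_add, Category.assoc] using hs
    refine .inl (isSplitEpi_of_inCatRadical_id_sub (s := s ≫ biprod.fst) ?_)
    rw [← hs', add_sub_cancel_left]
    exact hb.comp_left _
  · obtain ⟨⟨r, hr⟩⟩ := hr.exists_splitMono
    have hr' : g ≫ biprod.inl ≫ r + a ≫ biprod.inr ≫ r = 𝟙 X := by
      simpa only [biprod.lift_eq, add_comp, Category.assoc] using hr
    refine .inr (isSplitMono_of_inCatRadical_id_sub (r := biprod.inl ≫ r) ?_)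
    rw [← hr', add_sub_cancel_left]
    exact ha.comp_right _

namespace CatIdeal

variable (I : CatIdeal C)

instance : Congruence I.rel where
  equivalence :=
    { refl := fun _ => by simp only [rel, sub_self, zero_mem]
      symm := fun h => by simpa only [rel, neg_sub] using neg_mem h
      trans := fun h₁ h₂ => by simpa only [rel, sub_add_sub_cancel] using add_mem h₁ h₂ }
  comp_left f _ _ h := by simpa only [rel, ← comp_sub] using I.comp_left _ h f
  comp_right g h := by simpa only [rel, ← sub_comp] using I.comp_right _ h g

lemma isSplitMono_of_isSplitMono_map {X Z : C} (hX : ∀ u ∈ I.I X X, InCatRadical u)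
    {g : X ⟶ Z} (hg : IsSplitMono ((Quotient.functor I.rel).map g)) : IsSplitMono g := by
  obtain ⟨r, hr⟩ :=
    (Quotient.functor I.rel).map_surjective (retraction ((Quotient.functor I.rel).map g))
  have : I.rel (g ≫ r) (𝟙 X) := (Quotient.functor_map_eq_iff _ _ _).1 <| by
    rw [Functor.map_comp, (Quotient.functor I.rel).map_id, hr, IsSplitMono.id]
  refine isSplitMono_of_inCatRadical_id_sub (r := r) ?_
  rw [← neg_sub]
  exact (hX _ this).neg

lemma isSplitEpi_of_isSplitEpi_map {Z Y : C} (hY : ∀ u ∈ I.I Y Y, InCatRadical u)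
    {h : Z ⟶ Y} (hh : IsSplitEpi ((Quotient.functor I.rel).map h)) : IsSplitEpi h := by
  obtain ⟨s, hs⟩ :=
    (Quotient.functor I.rel).map_surjective (section_ ((Quotient.functor I.rel).map h))
  have : I.rel (s ≫ h) (𝟙 Y) := (Quotient.functor_map_eq_iff _ _ _).1 <| by
    rw [Functor.map_comp, (Quotient.functor I.rel).map_id, hs, IsSplitEpi.id]
  refine isSplitEpi_of_inCatRadical_id_sub (s := s) ?_
  rw [← neg_sub]
  exact (hY _ this).neg

lemma irreducibleHom_map [HasBinaryBiproducts C] {X Y : C}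
    (hX : ∀ u ∈ I.I X X, InCatRadical u) (hY : ∀ u ∈ I.I Y Y, InCatRadical u)
    (hXY : ∀ u ∈ I.I X Y, IsCompOfRadical u) {f : X ⟶ Y} (hf : IrreducibleHom f) :
    IrreducibleHom ((Quotient.functor I.rel).map f) := by
  refine ⟨fun hm => hf.1 (I.isSplitMono_of_isSplitMono_map hX hm),
    fun he => hf.2.1 (I.isSplitEpi_of_isSplitEpi_map hY he), ?_⟩
  rintro ⟨Z⟩ g' h' hgh
  obtain ⟨g, rfl⟩ := (Quotient.functor I.rel).map_surjective g'
  obtain ⟨h, rfl⟩ := (Quotient.functor I.rel).map_surjective h'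
  have : I.rel f (g ≫ h) := (Quotient.functor_map_eq_iff _ _ _).1 <| by rw [Functor.map_comp, hgh]
  exact (hf.isSplitEpi_or_isSplitMono_of_isCompOfRadical_sub g h (hXY _ this)).imp
    (fun hh => .mk' (hh.exists_splitEpi.some.map _))
    (fun hg => .mk' (hg.exists_splitMono.some.map _))

lemma irreducibleHom_of_irreducibleHom_map {X Y : C} (hX : ∀ u ∈ I.I X X, InCatRadical u)
    (hY : ∀ u ∈ I.I Y Y, InCatRadical u) {f : X ⟶ Y}
    (hf : IrreducibleHom ((Quotient.functor I.rel).map f)) : IrreducibleHom f :=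
  ⟨fun _ => hf.1 (by infer_instance), fun _ => hf.2.1 (by infer_instance), fun _ g h hgh =>
    (hf.2.2 _ _ _ (by rw [← Functor.map_comp, hgh])).imp
      (I.isSplitEpi_of_isSplitEpi_map hY) (I.isSplitMono_of_isSplitMono_map hX)⟩

end CatIdeal

theorem stmt_19_general {C : Type u} [Category.{v} C] [Preadditive C]
    [HasFiniteBiproducts C] [HasBinaryBiproducts C]
    (I : CatIdeal C) (hI : I.Admissible)
    {X Y : C} {n m : ℕ} (Xs : Fin n → C) (Ys : Fin m → C)
    (iX : X ≅ ⨁ Xs) (iY : Y ≅ ⨁ Ys)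
    (hXind : ∀ i, IsIndecomposable (Xs i)) (hYind : ∀ j, IsIndecomposable (Ys j))
    (hXI : ∀ i, 𝟙 (Xs i) ∉ I.I (Xs i) (Xs i)) (hYI : ∀ j, 𝟙 (Ys j) ∉ I.I (Ys j) (Ys j))
    (f : X ⟶ Y) :
    IrreducibleHom f ↔ IrreducibleHom ((Quotient.functor I.rel).map f) := by
  have hX : ∀ u ∈ I.I X X, InCatRadical u := fun _ hu =>
    (hI.isCompOfRadical_of_mem iX iX hXind hXind hXI hXI hu).inCatRadical
  have hY : ∀ u ∈ I.I Y Y, InCatRadical u := fun _ hu =>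
    (hI.isCompOfRadical_of_mem iY iY hYind hYind hYI hYI hu).inCatRadical
  have hXY : ∀ u ∈ I.I X Y, IsCompOfRadical u := fun _ hu =>
    hI.isCompOfRadical_of_mem iX iY hXind hYind hXI hYI hu
  exact ⟨I.irreducibleHom_map hX hY hXY, I.irreducibleHom_of_irreducibleHom_map hX hY⟩

/-- In a Krull-Schmidt `k`-category with admissible ideal `I`, if `X` and `Y`
decompose into indecomposables whose identities are not in `I`, then a morphism
`f : X ⟶ Y` is irreducible in `A` iff its image is irreducible in `A/I`. -/
theorem stmt_19 {k : Type*} [CommRing k] {C : Type u} [Category.{v} C] [Preadditive C]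
    [Linear k C] [HasFiniteBiproducts C] [HasBinaryBiproducts C] (hKS : IsKrullSchmidt C)
    (I : CatIdeal C) (hI : I.Admissible)
    {X Y : C} {n m : ℕ} (Xs : Fin n → C) (Ys : Fin m → C)
    (iX : X ≅ ⨁ Xs) (iY : Y ≅ ⨁ Ys)
    (hXind : ∀ i, IsIndecomposable (Xs i)) (hYind : ∀ j, IsIndecomposable (Ys j))
    (hXI : ∀ i, 𝟙 (Xs i) ∉ I.I (Xs i) (Xs i)) (hYI : ∀ j, 𝟙 (Ys j) ∉ I.I (Ys j) (Ys j))
    (f : X ⟶ Y) :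
    IrreducibleHom f ↔ IrreducibleHom ((Quotient.functor I.rel).map f) :=
  stmt_19_general I hI Xs Ys iX iY hXind hYind hXI hYI f
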